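/- arXiv:1411.3861 — 4 statements merged into one kernel-verified Lean document; each statement's English description precedes it below -/
import Mathlib

section
/- Let L be a Leibniz algebra whose corresponding Lie algebra is the Heisenberg algebra H_{2k+1} and whose module I is the Fock module F[x₁,...,x_k]. Then L admits a basis consisting of {1̄, x̄_i, ∂̄/∂x_i : 1 ≤ i ≤ k} together with the monomials x₁^{t₁}···x_k^{t_k}, on which the only nonzero products are: [x̄_i, ∂̄/∂x_i] = 1̄, [∂̄/∂x_i, x̄_i] = -1̄, [m, 1̄] = m, [m, x̄_i] = x_i·m, and [m, ∂̄/∂x_i] = ∂m/∂x_i for each monomial m; in particular all products of the form [h, m] with h ∈ H_{2k+1}, m a monomial, and all products [1̄,1̄], [x̄_i, 1̄], [∂̄/∂x_i, 1̄], [x̄_i, x̄_j], [∂̄/∂x_i, ∂̄/∂x_j], [x̄_i, x̄_j] vanish, and [x̄_i, ∂̄/∂x_j] = [∂̄/∂x_i, x̄_j] = 0 for i ≠ j. -/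
/-- A (right) Leibniz algebra over a field `F`: a vector space with a bilinear
bracket satisfying `[[y,z],x] = [[y,x],z] + [y,[z,x]]`. -/
structure LeibnizAlgebra (F L : Type*) [Field F] [AddCommGroup L] [Module F L] where
  bracket : L →ₗ[F] L →ₗ[F] L
  leibniz : ∀ x y z : L,
    bracket (bracket y z) x = bracket (bracket y x) z + bracket y (bracket z x)

/-- The two-sided ideal of `L` generated by the squares `[x,x]`. -/
def LeibnizAlgebra.squaresIdeal {F L : Type*} [Field F] [AddCommGroup L] [Module F L]
    (B : LeibnizAlgebra F L) : Submodule F L :=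
  sInf {N : Submodule F L | (∀ x : L, B.bracket x x ∈ N) ∧
    ∀ a : L, ∀ n ∈ N, B.bracket a n ∈ N ∧ B.bracket n a ∈ N}

open MvPolynomial

/-- **Classification of Heisenberg–Fock Leibniz algebras** (Theorem 2.1).
Let `L` be a Leibniz algebra whose ideal of squares `I` is (via `ι`) the Fock
module `F[x₁,...,x_k]` over the corresponding Lie algebra `L/I ≅ H_{2k+1}`,
where `one, xb i, db i` are lifts of the standard basis `1̄, x̄ᵢ, ∂̄/∂xᵢ` of
`H_{2k+1}` (so all their brackets agree with the Heisenberg table modulo `I`),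
and the action of `L/I` on `I` is the Fock action.  Then the lifts can be
corrected by elements of `I` so that, together with the monomial basis of `I`,
they form a basis of `L` on which the only nonzero products are
`[x̄ᵢ,∂̄/∂xᵢ] = 1̄`, `[∂̄/∂xᵢ,x̄ᵢ] = -1̄`, `[p,1̄] = p`, `[p,x̄ᵢ] = xᵢp` and
`[p,∂̄/∂xᵢ] = ∂p/∂xᵢ`. -/
theorem heisenbergFock_classification
    {F L : Type*} [Field F] [CharZero F] [IsAlgClosed F]
    [AddCommGroup L] [Module F L] {k : ℕ} (hk : 0 < k)
    (B : LeibnizAlgebra F L)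
    (ι : MvPolynomial (Fin k) F →ₗ[F] L) (hinj : Function.Injective ι)
    (hrange : LinearMap.range ι = B.squaresIdeal)
    (one : L) (xb db : Fin k → L)
    (hspan : Submodule.span F (Set.range xb ∪ Set.range db ∪ {one} ∪ Set.range ι) = ⊤)
    -- the classes of `one, xb i, db i` modulo `I` multiply as in `H_{2k+1}` :
    (h1 : ∀ i, B.bracket (xb i) (db i) - one ∈ B.squaresIdeal)
    (h2 : ∀ i, B.bracket (db i) (xb i) + one ∈ B.squaresIdeal)
    (h3 : ∀ i j, i ≠ j → B.bracket (xb i) (db j) ∈ B.squaresIdeal)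
    (h4 : ∀ i j, i ≠ j → B.bracket (db i) (xb j) ∈ B.squaresIdeal)
    (h5 : ∀ i j, B.bracket (xb i) (xb j) ∈ B.squaresIdeal)
    (h6 : ∀ i j, B.bracket (db i) (db j) ∈ B.squaresIdeal)
    (h7 : ∀ i, B.bracket (xb i) one ∈ B.squaresIdeal)
    (h8 : ∀ i, B.bracket (db i) one ∈ B.squaresIdeal)
    (h9 : ∀ i, B.bracket one (xb i) ∈ B.squaresIdeal)
    (h10 : ∀ i, B.bracket one (db i) ∈ B.squaresIdeal)
    (h11 : B.bracket one one ∈ B.squaresIdeal)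
    -- the action of `L/I` on `I` is the Fock action :
    (hact1 : ∀ p, B.bracket (ι p) one = ι p)
    (hact2 : ∀ p i, B.bracket (ι p) (xb i) = ι (X i * p))
    (hact3 : ∀ p i, B.bracket (ι p) (db i) = ι (pderiv i p)) :
    ∃ (one' : L) (xb' db' : Fin k → L),
      one' - one ∈ B.squaresIdeal ∧
      (∀ i, xb' i - xb i ∈ B.squaresIdeal) ∧
      (∀ i, db' i - db i ∈ B.squaresIdeal) ∧
      (∀ i, B.bracket (xb' i) (db' i) = one') ∧
      (∀ i, B.bracket (db' i) (xb' i) = - one') ∧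
      (∀ i j, i ≠ j → B.bracket (xb' i) (db' j) = 0) ∧
      (∀ i j, i ≠ j → B.bracket (db' i) (xb' j) = 0) ∧
      (∀ i j, B.bracket (xb' i) (xb' j) = 0) ∧
      (∀ i j, B.bracket (db' i) (db' j) = 0) ∧
      (∀ i, B.bracket (xb' i) one' = 0) ∧
      (∀ i, B.bracket (db' i) one' = 0) ∧
      B.bracket one' one' = 0 ∧
      (∀ i, B.bracket one' (xb' i) = 0) ∧
      (∀ i, B.bracket one' (db' i) = 0) ∧
      (∀ p, B.bracket (ι p) one' = ι p) ∧
      (∀ p i, B.bracket (ι p) (xb' i) = ι (X i * p)) ∧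
      (∀ p i, B.bracket (ι p) (db' i) = ι (pderiv i p)) ∧
      (∀ (a : L) (p : MvPolynomial (Fin k) F), B.bracket a (ι p) = 0) := by

  classical
  have sq0 : ∀ y x : L, B.bracket y (B.bracket x x) = 0 := by
    intro y x
    exact left_eq_add.mp (B.leibniz x y x)
  set S : Set L := {z | ∃ x : L, z = B.bracket x x} with hS
  have hz0 : ∀ (a m : L), m ∈ Submodule.span F S → B.bracket a m = 0 := by
    intro a m hm
    induction hm using Submodule.span_induction with
    | mem z hzS => obtain ⟨x, rfl⟩ := hzS; exact sq0 a x
    | zero => exact map_zero _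
    | add u v hu hv ihu ihv => rw [map_add, ihu, ihv, add_zero]
    | smul c u hu ihu => rw [map_smul, ihu, smul_zero]
  have pairmem : ∀ u v : L, B.bracket u v + B.bracket v u ∈ Submodule.span F S := by
    intro u v
    have h : B.bracket u v + B.bracket v u
        = B.bracket (u + v) (u + v) - B.bracket u u - B.bracket v v := by
      simp only [map_add, LinearMap.add_apply]
      abel
    rw [h]
    exact sub_mem (sub_mem (Submodule.subset_span ⟨u + v, rfl⟩)
      (Submodule.subset_span ⟨u, rfl⟩)) (Submodule.subset_span ⟨v, rfl⟩)
  have hIle : B.squaresIdeal ≤ Submodule.span F S := by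
    apply sInf_le
    refine ⟨fun x => Submodule.subset_span ⟨x, rfl⟩, ?_⟩
    intro a n hn
    refine ⟨by rw [hz0 a n hn]; exact (Submodule.span F S).zero_mem, ?_⟩
    induction hn using Submodule.span_induction with
    | mem z hzS =>
        obtain ⟨x, rfl⟩ := hzS
        rw [B.leibniz a x x]
        exact pairmem (B.bracket x a) x
    | zero => rw [map_zero, LinearMap.zero_apply]; exact (Submodule.span F S).zero_mem
    | add u v hu hv ihu ihv => rw [map_add, LinearMap.add_apply]; exact add_mem ihu ihv
    | smul c u hu ihu =>
        rw [map_smul, LinearMap.smul_apply]; exact Submodule.smul_mem _ c ihu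
  have leftzero : ∀ (a n : L), n ∈ B.squaresIdeal → B.bracket a n = 0 :=
    fun a n hn => hz0 a n (hIle hn)
  have hmem : ∀ p, ι p ∈ B.squaresIdeal := by
    intro p; rw [← hrange]; exact LinearMap.mem_range_self ι p
  have Bz : ∀ (a : L) (p : MvPolynomial (Fin k) F), B.bracket a (ι p) = 0 :=
    fun a p => leftzero a _ (hmem p)
  have hex : ∀ z : L, z ∈ B.squaresIdeal → ∃ p, ι p = z := by
    intro z hz
    rw [← hrange] at hz
    exact hz
  have fix : ∀ z : L, z ∈ B.squaresIdeal → B.bracket z one = z := by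
    intro z hz
    obtain ⟨p, rfl⟩ := hex z hz
    exact hact1 p
  have key : ∀ y z : L, B.bracket z one ∈ B.squaresIdeal →
      B.bracket (B.bracket y z) one = B.bracket (B.bracket y one) z := by
    intro y z hz
    obtain ⟨p, hp⟩ := hex _ hz
    rw [B.leibniz one y z, ← hp, Bz, add_zero]
  obtain ⟨e0, he0⟩ := hex _ h11
  choose aa haa using fun i => hex _ (h7 i)
  choose bb hbb using fun i => hex _ (h8 i)
  have X7 : ∀ j, B.bracket one (xb j) = ι (X j * e0) := by
    intro j
    have hk := key one (xb j) (h7 j)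
    rw [fix _ (h9 j), ← he0, hact2] at hk
    exact hk
  have X8 : ∀ j, B.bracket one (db j) = ι (pderiv j e0) := by
    intro j
    have hk := key one (db j) (h8 j)
    rw [fix _ (h10 j), ← he0, hact3] at hk
    exact hk
  have X3 : ∀ i j, i ≠ j → B.bracket (xb i) (db j) = ι (pderiv j (aa i)) := by
    intro i j hij
    have hk := key (xb i) (db j) (h8 j)
    rw [fix _ (h3 i j hij), ← haa i, hact3] at hk
    exact hk
  have X4 : ∀ i j, i ≠ j → B.bracket (db i) (xb j) = ι (X j * bb i) := by
    intro i j hij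
    have hk := key (db i) (xb j) (h7 j)
    rw [fix _ (h4 i j hij), ← hbb i, hact2] at hk
    exact hk
  have X5 : ∀ i j, B.bracket (xb i) (xb j) = ι (X j * aa i) := by
    intro i j
    have hk := key (xb i) (xb j) (h7 j)
    rw [fix _ (h5 i j), ← haa i, hact2] at hk
    exact hk
  have X6 : ∀ i j, B.bracket (db i) (db j) = ι (pderiv j (bb i)) := by
    intro i j
    have hk := key (db i) (db j) (h8 j)
    rw [fix _ (h6 i j), ← hbb i, hact3] at hk
    exact hk
  have X1 : ∀ i, B.bracket (xb i) (db i) = one + ι (pderiv i (aa i)) - ι e0 := by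
    intro i
    have hk := key (xb i) (db i) (h8 i)
    rw [← haa i, hact3] at hk
    have h1' := fix _ (h1 i)
    rw [map_sub, LinearMap.sub_apply, hk, ← he0] at h1'
    have hA : B.bracket (xb i) (db i)
        = (B.bracket (xb i) (db i) - one) + one := by abel
    rw [hA, ← h1']
    abel
  have X2 : ∀ i, B.bracket (db i) (xb i) = -one + (ι (X i * bb i) + ι e0) := by
    intro i
    have hk := key (db i) (xb i) (h7 i)
    rw [← hbb i, hact2] at hk
    have h2' := fix _ (h2 i)
    rw [map_add, LinearMap.add_apply, hk, ← he0] at h2'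
    have hA : B.bracket (db i) (xb i)
        = (B.bracket (db i) (xb i) + one) - one := by abel
    rw [hA, ← h2']
    abel
  refine ⟨one - ι e0, fun i => xb i - ι (aa i), fun i => db i - ι (bb i),
    ?_, ?_, ?_, ?_, ?_, ?_, ?_, ?_, ?_, ?_, ?_, ?_, ?_, ?_, ?_, ?_, ?_, ?_⟩
  · have h : one - ι e0 - one = -(ι e0) := by abel
    rw [h]; exact neg_mem (hmem e0)
  · intro i
    have h : xb i - ι (aa i) - xb i = -(ι (aa i)) := by abel
    rw [h]; exact neg_mem (hmem (aa i))
  · intro i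
    have h : db i - ι (bb i) - db i = -(ι (bb i)) := by abel
    rw [h]; exact neg_mem (hmem (bb i))
  · intro i
    simp only [map_sub, LinearMap.sub_apply, Bz, sub_zero]
    rw [X1 i, hact3]
    abel
  · intro i
    simp only [map_sub, LinearMap.sub_apply, Bz, sub_zero]
    rw [X2 i, hact2]
    abel
  · intro i j hij
    simp only [map_sub, LinearMap.sub_apply, Bz, sub_zero]
    rw [X3 i j hij, hact3, sub_self]
  · intro i j hij
    simp only [map_sub, LinearMap.sub_apply, Bz, sub_zero]
    rw [X4 i j hij, hact2, sub_self]
  · intro i j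
    simp only [map_sub, LinearMap.sub_apply, Bz, sub_zero]
    rw [X5 i j, hact2, sub_self]
  · intro i j
    simp only [map_sub, LinearMap.sub_apply, Bz, sub_zero]
    rw [X6 i j, hact3, sub_self]
  · intro i
    simp only [map_sub, LinearMap.sub_apply, Bz, sub_zero]
    rw [← haa i, hact1, sub_self]
  · intro i
    simp only [map_sub, LinearMap.sub_apply, Bz, sub_zero]
    rw [← hbb i, hact1, sub_self]
  · simp only [map_sub, LinearMap.sub_apply, Bz, sub_zero]
    rw [← he0, hact1, sub_self]
  · intro i
    simp only [map_sub, LinearMap.sub_apply, Bz, sub_zero]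
    rw [X7 i, hact2, sub_self]
  · intro i
    simp only [map_sub, LinearMap.sub_apply, Bz, sub_zero]
    rw [X8 i, hact3, sub_self]
  · intro p
    simp only [map_sub, LinearMap.sub_apply, Bz, sub_zero]
    exact hact1 p
  · intro p i
    simp only [map_sub, LinearMap.sub_apply, Bz, sub_zero]
    exact hact2 p i
  · intro p i
    simp only [map_sub, LinearMap.sub_apply, Bz, sub_zero]
    exact hact3 p i
  · exact Bz
end

section
/- Let L be a generalized Heisenberg–Fock Leibniz algebra, i.e., L/I is a direct sum H_{2k₁+1} ⊕ ··· ⊕ H_{2k_s+1} of Heisenberg algebras and I = F[x₁,...,x_n] (n = k₁+···+k_s) with the action induced by Fock representations. If a and b are standard basis elements of two distinct Heisenberg summands H_{2k_i+1} and H_{2k_j+1} (i ≠ j) of a lift of L/I in L, then [a,b] = 0 in L. -/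
theorem LeibnizAlgebra.bracket_square_right' {F L : Type*} [Field F] [AddCommGroup L]
    [Module F L] (B : LeibnizAlgebra F L) (x y : L) :
    B.bracket x (B.bracket y y) = 0 := by
  have h := B.leibniz y x y
  exact (left_eq_add.mp h)

theorem LeibnizAlgebra.squaresIdeal_le_span {F L : Type*} [Field F] [AddCommGroup L]
    [Module F L] (B : LeibnizAlgebra F L) :
    B.squaresIdeal ≤ Submodule.span F (Set.range fun x => B.bracket x x) := by
  set N := Submodule.span F (Set.range fun x => B.bracket x x) with hN
  have hsq : ∀ x : L, B.bracket x x ∈ N := fun x =>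
    Submodule.subset_span ⟨x, rfl⟩
  have hsum : ∀ u v : L, B.bracket u v + B.bracket v u ∈ N := by
    intro u v
    have : B.bracket u v + B.bracket v u
        = B.bracket (u+v) (u+v) - B.bracket u u - B.bracket v v := by
      simp [map_add]; abel
    rw [this]
    exact sub_mem (sub_mem (hsq _) (hsq _)) (hsq _)
  have hleft : ∀ (z : L), ∀ n ∈ N, B.bracket z n = 0 := by
    intro z n hn
    induction hn using Submodule.span_induction with
    | mem s hs =>
      obtain ⟨y, rfl⟩ := hs
      exact B.bracket_square_right' z y
    | zero => simp
    | add p q _ _ hp hq => simp [hp, hq]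
    | smul c p _ hp => simp [hp]
  have hright : ∀ (z : L), ∀ n ∈ N, B.bracket n z ∈ N := by
    intro z n hn
    induction hn using Submodule.span_induction with
    | mem s hs =>
      obtain ⟨y, rfl⟩ := hs
      rw [B.leibniz z y y]
      exact hsum _ _
    | zero => simp
    | add p q hp' hq' hp hq =>
      rw [map_add, LinearMap.add_apply]; exact add_mem hp hq
    | smul c p hp' hp =>
      rw [map_smul, LinearMap.smul_apply]; exact Submodule.smul_mem _ _ hp
  refine sInf_le ⟨hsq, fun z n hn => ⟨?_, hright z n hn⟩⟩
  rw [hleft z n hn]; exact zero_mem _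

/-- **Lemma 2.2** (abstract form).  In a generalized Heisenberg–Fock Leibniz
algebra, let `a` be a standard basis element of the summand `H_{2kᵢ+1}` and `b`
one of a different summand `H_{2kⱼ+1}` (`i ≠ j`), and let `onei` be the lift of
the element `1̄ᵢ`.  The relevant facts are: `[a,b]` and `[b,1̄ᵢ]` lie in the
ideal of squares `I`, `[a,1̄ᵢ] = 0`, and `1̄ᵢ` acts on `I` as the identity.
Then `[a,b] = 0`. -/
theorem generalized_heisenbergFock_cross_bracket_eq_zero
    {F L : Type*} [Field F] [CharZero F] [IsAlgClosed F]
    [AddCommGroup L] [Module F L]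
    (B : LeibnizAlgebra F L) (a b onei : L)
    (hab : B.bracket a b ∈ B.squaresIdeal)
    (hb1 : B.bracket b onei ∈ B.squaresIdeal)
    (ha1 : B.bracket a onei = 0)
    (hid : ∀ p ∈ B.squaresIdeal, B.bracket p onei = p) :
    B.bracket a b = 0 := by
  have hle := B.squaresIdeal_le_span
  have hleft0 : ∀ n ∈ Submodule.span F (Set.range fun x => B.bracket x x),
      B.bracket a n = 0 := by
    intro n hn'
    induction hn' using Submodule.span_induction with
    | mem s hs => obtain ⟨y, rfl⟩ := hs; exact B.bracket_square_right' a y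
    | zero => simp
    | add p q _ _ hp hq => simp [hp, hq]
    | smul c p _ hp => simp [hp]
  have hleft : ∀ n ∈ B.squaresIdeal, B.bracket a n = 0 := fun n hn => hleft0 n (hle hn)
  have h1 : B.bracket (B.bracket a b) onei = B.bracket a b := hid _ hab
  have h2 := B.leibniz onei a b
  rw [ha1] at h2
  simp only [map_zero, LinearMap.zero_apply, zero_add] at h2
  rw [h1, hleft _ hb1] at h2
  simpa using h2
end

section
/- For a linear map Ω : F[x] → F[x], the action ψ₃ defined by p·1̄ = p, p·x̄ = xp, p·∂̄/∂x = Ω(p) makes F[x] into an H₃-module if and only if there exists a fixed polynomial c(x) ∈ F[x] such that Ω(x^i) = i·x^{i-1} + x^i·c(x) for all i ≥ 0. -/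
open Polynomial

/-- The 3-dimensional Heisenberg Lie algebra `H₃` in coordinates: `(c, a, b)`
represents `c·1̄ + a·x̄ + b·(∂̄/∂x)`; the only nonzero brackets of basis
elements are `[x̄, ∂̄/∂x] = 1̄ = -[∂̄/∂x, x̄]`. -/
def h3Bracket {F : Type*} [Field F] (u v : F × F × F) : F × F × F :=
  (u.2.1 * v.2.2 - u.2.2 * v.2.1, 0, 0)

/-- The action `ψ₃` on `F[x]`: `p·1̄ = p`, `p·x̄ = xp`, `p·∂̄/∂x = Ω(p)`. -/
noncomputable def psi3Act {F : Type*} [Field F] (Ω : Polynomial F →ₗ[F] Polynomial F)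
    (p : Polynomial F) (u : F × F × F) : Polynomial F :=
  u.1 • p + u.2.1 • (X * p) + u.2.2 • Ω p

/-- **Proposition 3.4.** The action `ψ₃` makes `F[x]` an `H₃`-module if and
only if there is a fixed polynomial `c(x) ∈ F[x]` with
`Ω(xⁱ) = i x^{i-1} + xⁱ c(x)` for all `i ≥ 0`. -/
theorem psi3_module_iff {F : Type*} [Field F] [CharZero F]
    (Ω : Polynomial F →ₗ[F] Polynomial F) :
    (∀ (p : Polynomial F) (a b : F × F × F),
        psi3Act Ω p (h3Bracket a b) =
          psi3Act Ω (psi3Act Ω p a) b - psi3Act Ω (psi3Act Ω p b) a)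
      ↔ ∃ c : Polynomial F, ∀ i : ℕ,
          Ω (X ^ i) = C (i : F) * X ^ (i - 1) + X ^ i * c := by
  have key : (∀ (p : Polynomial F) (a b : F × F × F),
        psi3Act Ω p (h3Bracket a b) =
          psi3Act Ω (psi3Act Ω p a) b - psi3Act Ω (psi3Act Ω p b) a)
      ↔ ∀ p : Polynomial F, Ω (X * p) = p + X * Ω p := by
    constructor
    · intro h p
      have := h p (0,1,0) (0,0,1)
      simp [psi3Act, h3Bracket] at this
      linear_combination -this
    · intro h p a b
      simp only [psi3Act, h3Bracket, smul_add, map_add, map_smul, mul_add, smul_smul]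
      rw [h]
      simp only [smul_eq_C_mul, smul_add, smul_eq_C_mul, map_mul, map_sub, map_zero, map_one]
      ring
  rw [key]
  constructor
  · intro h
    refine ⟨Ω 1, fun i => ?_⟩
    induction i with
    | zero => simp
    | succ n ih =>
      have h1 : Ω (X ^ (n+1)) = X ^ n + X * Ω (X ^ n) := by
        rw [pow_succ, mul_comm, h]
      rw [h1, ih]
      cases n with
      | zero => simp
      | succ m =>
        simp only [Nat.add_sub_cancel, Nat.cast_add, Nat.cast_one, C_add, C_1]
        ring
  · rintro ⟨c, hc⟩ p
    induction p using Polynomial.induction_on' with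
    | add p q hp hq => rw [mul_add, map_add, map_add, hp, hq]; ring
    | monomial n a =>
      rw [← C_mul_X_pow_eq_monomial]
      rw [← smul_eq_C_mul,
        show X * (a • X ^ n) = a • (X ^ (n+1) : Polynomial F) by
          rw [smul_eq_C_mul, smul_eq_C_mul]; ring,
        map_smul, map_smul, hc, hc, Nat.add_sub_cancel]
      cases n with
      | zero => simp [smul_add, smul_eq_C_mul]; ring
      | succ m =>
        simp only [Nat.add_sub_cancel, smul_add, smul_eq_C_mul,
          Nat.cast_add, Nat.cast_one, Nat.cast_ofNat, C_add, C_1, map_ofNat]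
        ring
end

section
/- The two Leibniz algebras L(0,1,0,1,0,0,0,1,λ) and L(0,1,0,1,0,0,0,1,λ') from the classification of 6-dimensional Leibniz algebras with corresponding Lie algebra H₃ and minimal faithful module are isomorphic if and only if λ = λ'. -/
@[simp] lemma my_cons_val_two {α : Type*} {m : ℕ} (x : α) (u : Fin (m+2) → α) :
    Matrix.vecCons x u 2 = Matrix.vecHead (Matrix.vecTail u) :=
  rfl

@[simp] lemma my_cons_val_three {α : Type*} {m : ℕ} (x : α) (u : Fin (m+3) → α) :
    Matrix.vecCons x u 3 = Matrix.vecHead (Matrix.vecTail (Matrix.vecTail u)) :=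
  rfl

@[simp] lemma my_cons_val_four {α : Type*} {m : ℕ} (x : α) (u : Fin (m+4) → α) :
    Matrix.vecCons x u 4 =
      Matrix.vecHead (Matrix.vecTail (Matrix.vecTail (Matrix.vecTail u))) :=
  rfl

@[simp] lemma my_cons_val_five {α : Type*} {m : ℕ} (x : α) (u : Fin (m+5) → α) :
    Matrix.vecCons x u 5 =
      Matrix.vecHead (Matrix.vecTail (Matrix.vecTail (Matrix.vecTail (Matrix.vecTail u)))) :=
  rfl

/-- The bracket of the 9-parameter family `L(α₁,α₂,α₃,β₁,β₂,δ₁,δ₂,η₁,θ₁)` of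
6-dimensional algebras, written in the basis `x, y, z, e₁, e₂, e₃`
(coordinates `0,...,5`).  The nonzero products of basis elements are
`[e₂,x] = e₁`, `[e₃,y] = e₂`, `[e₃,z] = e₁`,
`[x,x] = α₁e₁ + α₂e₂ + α₃e₃`, `[x,y] = -z + δ₁e₁ + δ₂e₂`,
`[x,z] = η₁e₁ + α₃e₂`, `[y,y] = β₁e₁ + β₂e₂`, `[y,x] = z`, `[y,z] = θ₁e₁`,
`[z,x] = (δ₂-η₁)e₁ - 2α₃e₂`, `[z,y] = (β₂-θ₁)e₁`. -/
def brL {F : Type*} [Field F] (α1 α2 α3 β1 β2 δ1 δ2 η1 θ1 : F)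
    (u v : Fin 6 → F) : Fin 6 → F :=
  ![0, 0,
    -(u 0 * v 1) + u 1 * v 0,
    u 0 * v 0 * α1 + u 0 * v 1 * δ1 + u 0 * v 2 * η1 + u 1 * v 1 * β1 + u 1 * v 2 * θ1
      + u 2 * v 0 * (δ2 - η1) + u 2 * v 1 * (β2 - θ1) + u 4 * v 0 + u 5 * v 2,
    u 0 * v 0 * α2 + u 0 * v 1 * δ2 + u 0 * v 2 * α3 + u 1 * v 1 * β2
      + u 2 * v 0 * (-(2 * α3)) + u 5 * v 1,
    u 0 * v 0 * α3]


set_option maxHeartbeats 2000000 in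
/-- The Leibniz algebras `L(0,1,0,1,0,0,0,1,λ)` and `L(0,1,0,1,0,0,0,1,λ')`
are isomorphic (via a bijective linear map preserving the bracket) if and only
if `λ = λ'`. -/
theorem L_family_iso_iff {F : Type*} [Field F] [CharZero F] [IsAlgClosed F]
    (lam lam' : F) :
    (∃ f : (Fin 6 → F) ≃ₗ[F] (Fin 6 → F),
        ∀ u v : Fin 6 → F,
          f (brL 0 1 0 1 0 0 0 1 lam u v) = brL 0 1 0 1 0 0 0 1 lam' (f u) (f v))
      ↔ lam = lam' := by
  constructor
  · rintro ⟨f, h⟩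
    -- notation for images of basis vectors
    set X : Fin 6 → F := f ![1,0,0,0,0,0] with hXdef
    set Y : Fin 6 → F := f ![0,1,0,0,0,0] with hYdef
    set W : Fin 6 → F := f ![0,0,0,0,0,1] with hWdef
    set T : Fin 6 → F := f ![0,0,0,1,0,0] with hTdef
    -- [e1, v] = 0 and [u, e3] = 0
    have lz : ∀ v : Fin 6 → F, brL 0 1 0 1 0 0 0 1 lam ![0,0,0,1,0,0] v = 0 := by
      intro v; funext i; fin_cases i <;> norm_num [brL]
    have rz : ∀ u : Fin 6 → F, brL 0 1 0 1 0 0 0 1 lam u ![0,0,0,0,0,1] = 0 := by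
      intro u; funext i; fin_cases i <;> norm_num [brL]
    -- T = [Y,Y]'
    have htY : T = brL 0 1 0 1 0 0 0 1 lam' Y Y := by
      have := h ![0,1,0,0,0,0] ![0,1,0,0,0,0]
      rwa [show brL 0 1 0 1 0 0 0 1 lam ![0,1,0,0,0,0] ![0,1,0,0,0,0]
          = ![0,0,0,(1:F),0,0] from by funext i; fin_cases i <;> norm_num [brL]] at this
    -- 0 = [T, e0]'
    have htann : (0 : Fin 6 → F) = brL 0 1 0 1 0 0 0 1 lam' T ![1,0,0,0,0,0] := by
      have := h ![0,0,0,1,0,0] (f.symm ![1,0,0,0,0,0])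
      rwa [lz, map_zero, LinearEquiv.apply_symm_apply] at this
    -- f e4 = [X,X]'
    have hV : f ![0,0,0,0,1,0] = brL 0 1 0 1 0 0 0 1 lam' X X := by
      have := h ![1,0,0,0,0,0] ![1,0,0,0,0,0]
      rwa [show brL 0 1 0 1 0 0 0 1 lam ![1,0,0,0,0,0] ![1,0,0,0,0,0]
          = ![0,0,0,0,(1:F),0] from by funext i; fin_cases i <;> norm_num [brL]] at this
    -- T = [[X,X]',X]'
    have hVX : T = brL 0 1 0 1 0 0 0 1 lam' (brL 0 1 0 1 0 0 0 1 lam' X X) X := by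
      have := h ![0,0,0,0,1,0] ![1,0,0,0,0,0]
      rwa [show brL 0 1 0 1 0 0 0 1 lam ![0,0,0,0,1,0] ![1,0,0,0,0,0]
          = ![0,0,0,(1:F),0,0] from by funext i; fin_cases i <;> norm_num [brL], hV] at this
    -- 0 = [[X,X]',Y]'
    have hVY : (0 : Fin 6 → F) = brL 0 1 0 1 0 0 0 1 lam' (brL 0 1 0 1 0 0 0 1 lam' X X) Y := by
      have := h ![0,0,0,0,1,0] ![0,1,0,0,0,0]
      rwa [show brL 0 1 0 1 0 0 0 1 lam ![0,0,0,0,1,0] ![0,1,0,0,0,0]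
          = (0 : Fin 6 → F) from by funext i; fin_cases i <;> norm_num [brL], map_zero, hV] at this
    -- f z = [Y,X]'
    have hZ : f ![0,0,1,0,0,0] = brL 0 1 0 1 0 0 0 1 lam' Y X := by
      have := h ![0,1,0,0,0,0] ![1,0,0,0,0,0]
      rwa [show brL 0 1 0 1 0 0 0 1 lam ![0,1,0,0,0,0] ![1,0,0,0,0,0]
          = ![0,0,(1:F),0,0,0] from by funext i; fin_cases i <;> norm_num [brL]] at this
    -- 0 = [e0, W]'
    have hWann : (0 : Fin 6 → F) = brL 0 1 0 1 0 0 0 1 lam' ![1,0,0,0,0,0] W := by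
      have := h (f.symm ![1,0,0,0,0,0]) ![0,0,0,0,0,1]
      rwa [rz, map_zero, LinearEquiv.apply_symm_apply] at this
    -- 0 = [W, X]'
    have hWX : (0 : Fin 6 → F) = brL 0 1 0 1 0 0 0 1 lam' W X := by
      have := h ![0,0,0,0,0,1] ![1,0,0,0,0,0]
      rwa [show brL 0 1 0 1 0 0 0 1 lam ![0,0,0,0,0,1] ![1,0,0,0,0,0]
          = (0 : Fin 6 → F) from by funext i; fin_cases i <;> norm_num [brL], map_zero] at this
    -- T = [W, [Y,X]']'
    have hWZ : T = brL 0 1 0 1 0 0 0 1 lam' W (brL 0 1 0 1 0 0 0 1 lam' Y X) := by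
      have := h ![0,0,0,0,0,1] ![0,0,1,0,0,0]
      rwa [show brL 0 1 0 1 0 0 0 1 lam ![0,0,0,0,0,1] ![0,0,1,0,0,0]
          = ![0,0,0,(1:F),0,0] from by funext i; fin_cases i <;> norm_num [brL], hZ] at this
    -- -[Y,X]' = [X,Y]'
    have hXY : -(brL 0 1 0 1 0 0 0 1 lam' Y X) = brL 0 1 0 1 0 0 0 1 lam' X Y := by
      have := h ![1,0,0,0,0,0] ![0,1,0,0,0,0]
      rw [show brL 0 1 0 1 0 0 0 1 lam ![1,0,0,0,0,0] ![0,1,0,0,0,0]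
          = -![0,0,(1:F),0,0,0] from by funext i; fin_cases i <;> norm_num [brL],
        map_neg, hZ] at this
      exact this
    -- T = [X, [Y,X]']'
    have hXZ : T = brL 0 1 0 1 0 0 0 1 lam' X (brL 0 1 0 1 0 0 0 1 lam' Y X) := by
      have := h ![1,0,0,0,0,0] ![0,0,1,0,0,0]
      rwa [show brL 0 1 0 1 0 0 0 1 lam ![1,0,0,0,0,0] ![0,0,1,0,0,0]
          = ![0,0,0,(1:F),0,0] from by funext i; fin_cases i <;> norm_num [brL], hZ] at this
    -- lam • T = [Y, [Y,X]']'
    have hYZ : lam • T = brL 0 1 0 1 0 0 0 1 lam' Y (brL 0 1 0 1 0 0 0 1 lam' Y X) := by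
      have := h ![0,1,0,0,0,0] ![0,0,1,0,0,0]
      rwa [show brL 0 1 0 1 0 0 0 1 lam ![0,1,0,0,0,0] ![0,0,1,0,0,0]
          = lam • ![0,0,0,(1:F),0,0] from by funext i; fin_cases i <;> norm_num [brL],
        map_smul, hZ] at this
    clear_value X Y W T
    -- scalar components
    have eT0 := congrFun htY 0; simp [brL] at eT0
    have eT1 := congrFun htY 1; simp [brL] at eT1
    have eT2 := congrFun htY 2; simp [brL] at eT2
    have eT3 := congrFun htY 3; simp [brL] at eT3
    have eT4 := congrFun htY 4; simp [brL] at eT4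
    have eT5 := congrFun htY 5; simp [brL] at eT5
    have ean := congrFun htann 3; simp [brL] at ean
    have hT2z : T 2 = 0 := by linear_combination eT2
    have hT4z : T 4 = 0 := by linear_combination hT2z - ean
    have hTne : T ≠ 0 := by
      rw [hTdef]
      rw [LinearEquiv.map_ne_zero_iff]
      intro hv; have := congrFun hv 3; norm_num at this
    have htne : T 3 ≠ 0 := by
      intro h0
      apply hTne
      funext i
      fin_cases i <;> simp only [Pi.zero_apply] <;>
        first
          | exact eT0 | exact eT1 | exact hT2z | exact h0 | exact hT4z | exact eT5
    have rC := congrFun hVX 3; simp [brL] at rC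
    have rD := congrFun hVY 3; simp [brL] at rD
    have rW2 := congrFun hWann 2; simp [brL] at rW2
    have rW3 := congrFun hWann 3; simp [brL] at rW3
    have rW4 := congrFun hWann 4; simp [brL] at rW4
    have rWX := congrFun hWX 4; simp [brL] at rWX
    have rWZ := congrFun hWZ 3; simp [brL] at rWZ
    have rXY4 := congrFun hXY 4; simp [brL] at rXY4
    have rXZ := congrFun hXZ 3; simp [brL] at rXZ
    have rYZ := congrFun hYZ 3; simp [brL] at rYZ
    -- algebra
    have eC : T 3 = (X 0 * X 0 + X 5 * X 1) * X 0 := by linear_combination rC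
    have ha : X 0 ≠ 0 := by
      intro h0; apply htne; rw [h0] at eC; simpa using eC
    have hA : X 0 * X 0 + X 5 * X 1 ≠ 0 := by
      intro h0; apply htne; rw [eC, h0, zero_mul]
    have eD : (X 0 * X 0 + X 5 * X 1) * Y 0 = 0 := by linear_combination -rD
    have hc0 : Y 0 = 0 := (mul_eq_zero.mp eD).resolve_left hA
    have eA : Y 0 * Y 0 + Y 5 * Y 1 = 0 := by linear_combination hT4z - eT4
    have hsd : Y 5 * Y 1 = 0 := by linear_combination eA - Y 0 * hc0
    have hW0 : W 0 = 0 := rW4.symm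
    have hW1 : W 1 = 0 := rW2
    have eWZ : T 3 = W 5 * (Y 1 * X 0) := by
      linear_combination rWZ + (-(Y 0 * X 1) + Y 1 * X 0) * hW0
        + (-(Y 0 * X 1) + Y 1 * X 0) * lam' * hW1 - W 5 * X 1 * hc0
    have hd : Y 1 ≠ 0 := by
      intro h0; apply htne; rw [h0] at eWZ; simpa using eWZ
    have hw5 : W 5 ≠ 0 := by
      intro h0; apply htne; rw [h0] at eWZ; simpa using eWZ
    have eWX : W 5 * X 1 = 0 := by linear_combination -rWX - X 0 * hW0
    have hb0 : X 1 = 0 := (mul_eq_zero.mp eWX).resolve_left hw5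
    have hs0 : Y 5 = 0 := (mul_eq_zero.mp hsd).resolve_right hd
    have eQ : X 5 * Y 1 = 0 := by linear_combination -rXY4 - X 1 * hs0 - (2 * X 0) * hc0
    have hq0 : X 5 = 0 := (mul_eq_zero.mp eQ).resolve_right hd
    have etd : T 3 = Y 1 * Y 1 := by linear_combination eT3 + Y 4 * hc0 + Y 2 * hs0
    have eta3 : T 3 = X 0 * X 0 * X 0 := by linear_combination eC + X 1 * X 0 * hq0
    have eXZ : T 3 = X 0 * X 0 * Y 1 := by
      linear_combination rXZ + (-(Y 0 * X 1) + Y 1 * X 0) * lam' * hb0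
        + (-(Y 0 * X 1) + Y 1 * X 0) * hq0 - X 0 * X 1 * hc0
    have hda : Y 1 = X 0 := by
      apply mul_left_cancel₀ (mul_ne_zero ha ha)
      linear_combination eta3 - eXZ
    have ha1 : X 0 = 1 := by
      apply mul_left_cancel₀ (mul_ne_zero ha ha)
      linear_combination -eta3 + etd + (Y 1 + X 0) * hda
    have ht1 : T 3 = 1 := by rw [etd, hda, ha1]; norm_num
    rw [hc0, hs0, hda, ha1, ht1] at rYZ
    linear_combination rYZ
  · rintro rfl
    exact ⟨LinearEquiv.refl F _, fun u v => rfl⟩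
end
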